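/- arXiv:2202.04012 — 7 statements merged into one kernel-verified Lean document; each statement's English description precedes it below -/
import Mathlib

section
/- A finite field F_q is a definite field if and only if F_q has characteristic two, or q = p^k where p is a prime with p ≡ 3 (mod 4) and k is a positive odd integer. -/
/-- `x` is positive in `F` if it is the square of a nonzero element. -/
def IsPos {F : Type*} [Field F] (x : F) : Prop := ∃ μ : F, μ ≠ 0 ∧ x = μ ^ 2

/-- `F` is a definite field if every positive element has a positive square root. -/
def IsDefiniteField (F : Type*) [Field F] : Prop :=
  ∀ x : F, IsPos x → ∃ μ : F, IsPos μ ∧ x = μ ^ 2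

private lemma three_pow_odd_mod_four {k : ℕ} (hk : Odd k) : 3 ^ k % 4 = 3 := by
  obtain ⟨m, rfl⟩ := hk
  have h9 : (9 : ℕ) ^ m % 4 = 1 := by rw [Nat.pow_mod]; simp
  have he : (3 : ℕ) ^ (2 * m + 1) = 9 ^ m * 3 := by
    rw [pow_succ, pow_mul]; norm_num
  rw [he, Nat.mul_mod, h9]

private lemma three_pow_even_mod_four {k : ℕ} (hk : Even k) : 3 ^ k % 4 = 1 := by
  obtain ⟨m, rfl⟩ := hk
  have : (3 : ℕ) ^ (m + m) = 9 ^ m := by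
    rw [← two_mul, pow_mul]; norm_num
  rw [this, Nat.pow_mod]; simp

private lemma card_cond (F : Type*) [Field F] [Fintype F] :
    (ringChar F = 2 ∨ Fintype.card F % 4 = 3) ↔
      ringChar F = 2 ∨
        ∃ p k : ℕ, p.Prime ∧ p % 4 = 3 ∧ Odd k ∧ 0 < k ∧ Fintype.card F = p ^ k := by
  constructor
  · rintro (h | h)
    · exact Or.inl h
    · right
      obtain ⟨n, hp, hcard⟩ := FiniteField.card F (ringChar F)
      set p := ringChar F
      have hne2 : p ≠ 2 := by
        intro h2
        have := (FiniteField.even_card_iff_char_two (F := F)).mp h2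
        omega
      have hp2 : p % 2 = 1 := hp.eq_two_or_odd.resolve_left hne2
      have hmm : p % 4 % 2 = p % 2 := Nat.mod_mod_of_dvd p (by norm_num)
      have h14 : p % 4 = 1 ∨ p % 4 = 3 := by omega
      have hcm : Fintype.card F % 4 = (p % 4) ^ (n : ℕ) % 4 := by
        rw [hcard, Nat.pow_mod]
      rcases h14 with h1 | h3
      · rw [h1] at hcm; simp at hcm; omega
      · refine ⟨p, n, hp, h3, ?_, n.pos, hcard⟩
        rcases Nat.even_or_odd (n : ℕ) with he | ho
        · rw [h3] at hcm
          rw [three_pow_even_mod_four he] at hcm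
          omega
        · exact ho
  · rintro (h | ⟨p, k, hp, h3, hodd, hk, hcard⟩)
    · exact Or.inl h
    · right
      rw [hcard, Nat.pow_mod, h3, three_pow_odd_mod_four hodd]

private lemma definite_iff (F : Type*) [Field F] [Fintype F] :
    IsDefiniteField F ↔ (ringChar F = 2 ∨ Fintype.card F % 4 = 3) := by
  letI := Classical.decEq F
  constructor
  · intro hdef
    by_contra hcon
    push_neg at hcon
    obtain ⟨h2, h4⟩ := hcon
    obtain ⟨i, hi⟩ := FiniteField.isSquare_neg_one_iff.mpr h4
    obtain ⟨a, ha⟩ := FiniteField.exists_nonsquare (F := F) h2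
    have ha0 : a ≠ 0 := by rintro rfl; exact ha ⟨0, by simp⟩
    obtain ⟨μ, ⟨ν, hν0, rfl⟩, hμ⟩ := hdef (a ^ 2) ⟨a, ha0, rfl⟩
    have hfac : (a - ν ^ 2) * (a + ν ^ 2) = 0 := by linear_combination hμ
    rcases mul_eq_zero.mp hfac with h | h
    · exact ha ⟨ν, by linear_combination h⟩
    · exact ha ⟨i * ν, by linear_combination h + ν ^ 2 * hi⟩
  · rintro (h2 | h4)
    · rintro x ⟨μ, hμ0, rfl⟩
      obtain ⟨ρ, hρ⟩ := FiniteField.isSquare_of_char_two h2 μ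
      have hρ0 : ρ ≠ 0 := by rintro rfl; simp at hρ; exact hμ0 hρ
      exact ⟨μ, ⟨ρ, hρ0, by rw [hρ, sq]⟩, rfl⟩
    · have hns : ¬ IsSquare (-1 : F) := by
        rw [FiniteField.isSquare_neg_one_iff]; omega
      rintro x ⟨μ, hμ0, rfl⟩
      by_cases hsq : IsSquare μ
      · obtain ⟨ρ, hρ⟩ := hsq
        have hρ0 : ρ ≠ 0 := by rintro rfl; simp at hρ; exact hμ0 hρ
        exact ⟨μ, ⟨ρ, hρ0, by rw [hρ, sq]⟩, rfl⟩
      · have hχμ : quadraticChar F μ = -1 :=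
          quadraticChar_neg_one_iff_not_isSquare.mpr hsq
        have hχ1 : quadraticChar F (-1) = -1 :=
          quadraticChar_neg_one_iff_not_isSquare.mpr hns
        have hχ : quadraticChar F (-μ) = 1 := by
          have : (-μ : F) = -1 * μ := by ring
          rw [this, map_mul, hχμ, hχ1]; ring
        have hsq' : IsSquare (-μ) :=
          (quadraticChar_one_iff_isSquare (neg_ne_zero.mpr hμ0)).mp hχ
        obtain ⟨ρ, hρ⟩ := hsq'
        have hρ0 : ρ ≠ 0 := by
          rintro rfl; simp at hρ; exact hμ0 hρ
        exact ⟨-μ, ⟨ρ, hρ0, by rw [hρ, sq]⟩, by ring⟩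

/-- A finite field `F_q` is definite iff it has characteristic two, or
`q = p ^ k` with `p` a prime congruent to `3` mod `4` and `k` a positive odd integer. -/
theorem finite_definite_field_characterization
    (F : Type*) [Field F] [Fintype F] :
    IsDefiniteField F ↔
      ringChar F = 2 ∨
        ∃ p k : ℕ, p.Prime ∧ p % 4 = 3 ∧ Odd k ∧ 0 < k ∧ Fintype.card F = p ^ k := by
  rw [definite_iff, card_cond]
end

section
/- If A is a symmetric matrix over a definite field with a decomposition A = L·D·U where L is lower triangular with all ones along its diagonal, U is upper triangular with all ones along its diagonal, and all diagonal entries of the diagonal matrix D are positive, then A has a Cholesky decomposition, i.e., A = R·Rᵀ for some lower triangular matrix R with all diagonal entries positive. -/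
/-- `L` is lower triangular. -/
def IsLowerTri {F : Type*} [Field F] {n : ℕ} (L : Matrix (Fin n) (Fin n) F) : Prop :=
  ∀ i j : Fin n, i < j → L i j = 0

/-- `U` is upper triangular. -/
def IsUpperTri {F : Type*} [Field F] {n : ℕ} (U : Matrix (Fin n) (Fin n) F) : Prop :=
  ∀ i j : Fin n, j < i → U i j = 0

/-- A symmetric matrix over a definite field with an LDU decomposition whose
diagonal factor has all positive entries admits a Cholesky decomposition. -/
theorem cholesky_of_ldu_with_positive_diagonal
    (F : Type*) [Field F] (hF : IsDefiniteField F) (n : ℕ)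
    (A L U : Matrix (Fin n) (Fin n) F) (d : Fin n → F)
    (hsymm : A.IsSymm)
    (hL : IsLowerTri L) (hLdiag : ∀ i, L i i = 1)
    (hU : IsUpperTri U) (hUdiag : ∀ i, U i i = 1)
    (hd : ∀ i, IsPos (d i))
    (hA : A = L * Matrix.diagonal d * U) :
    ∃ R : Matrix (Fin n) (Fin n) F,
      IsLowerTri R ∧ (∀ i, IsPos (R i i)) ∧ A = R * R.transpose := by
  have hdne : ∀ i, d i ≠ 0 := by
    intro i
    obtain ⟨μ, hμ, hμ2⟩ := hd i
    rw [hμ2]; exact pow_ne_zero 2 hμ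
  -- entrywise formula
  have hent : ∀ i j : Fin n, A i j = ∑ k, L i k * d k * U k j := by
    intro i j
    rw [hA, Matrix.mul_apply]
    apply Finset.sum_congr rfl; intro k _; rw [Matrix.mul_diagonal]
  have hent' : ∀ i j : Fin n, A i j = ∑ k, U k i * d k * L j k := by
    intro i j
    have := hsymm
    rw [Matrix.IsSymm] at this
    calc A i j = A.transpose j i := rfl
    _ = A j i := by rw [this]
    _ = ∑ k, L j k * d k * U k i := hent j i
    _ = ∑ k, U k i * d k * L j k := by
        apply Finset.sum_congr rfl; intro k _; ring
  -- key: U = Lᵀ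
  have key' : ∀ m : ℕ, ∀ i j : Fin n, i.val = m → U i j = L j i := by
    intro m
    induction m using Nat.strong_induction_on with
    | _ m IH' =>
      intro i j him
      have IH : ∀ k : Fin n, k < i → ∀ j, U k j = L j k := by
        intro k hk j'
        exact IH' k.val (him ▸ hk) k j' rfl
      have heq : ∑ k, L i k * d k * U k j = ∑ k, U k i * d k * L j k := by
        rw [← hent i j, ← hent' i j]
      have herase : ∑ k ∈ Finset.univ.erase i, L i k * d k * U k j
          = ∑ k ∈ Finset.univ.erase i, U k i * d k * L j k := by
        apply Finset.sum_congr rfl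
        intro k hk
        have hki : k ≠ i := Finset.ne_of_mem_erase hk
        rcases lt_or_gt_of_ne hki with h | h
        · rw [IH k h j, IH k h i]
        · rw [hL i k h, hU k i h]; ring
      have hsum1 : ∑ k, L i k * d k * U k j
          = L i i * d i * U i j + ∑ k ∈ Finset.univ.erase i, L i k * d k * U k j :=
        (Finset.add_sum_erase _ _ (Finset.mem_univ i)).symm
      have hsum2 : ∑ k, U k i * d k * L j k
          = U i i * d i * L j i + ∑ k ∈ Finset.univ.erase i, U k i * d k * L j k :=
        (Finset.add_sum_erase _ _ (Finset.mem_univ i)).symm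
      have : L i i * d i * U i j = U i i * d i * L j i := by
        have := heq
        rw [hsum1, hsum2, herase] at this
        exact add_right_cancel this
      rw [hLdiag i, hUdiag i, one_mul] at this
      exact mul_left_cancel₀ (hdne i) this
  have key : ∀ i j : Fin n, U i j = L j i := fun i j => key' i.val i j rfl
  have hULt : U = L.transpose := by
    ext i j; exact key i j
  -- square roots
  choose s hs1 hs2 using fun i => hF (d i) (hd i)
  refine ⟨L * Matrix.diagonal s, ?_, ?_, ?_⟩
  · intro i j hij
    rw [Matrix.mul_diagonal, hL i j hij, zero_mul]
  · intro i
    rw [Matrix.mul_diagonal, hLdiag i, one_mul]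
    exact hs1 i
  · rw [hA, hULt]
    rw [Matrix.transpose_mul, Matrix.diagonal_transpose]
    rw [show L * Matrix.diagonal s * (Matrix.diagonal s * L.transpose)
        = L * (Matrix.diagonal s * Matrix.diagonal s) * L.transpose by
      noncomm_ring]
    rw [Matrix.diagonal_mul_diagonal]
    have hdd : (fun i => s i * s i) = d := by funext i; rw [hs2 i]; ring
    rw [hdd]
end

section
/- If A is a symmetric n × n matrix over a definite field all of whose leading principal minors are positive, then A has a Cholesky decomposition, i.e., A = L·Lᵀ for some lower triangular matrix L with all diagonal entries positive. -/
open Matrix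

/-- A symmetric matrix over a definite field all of whose leading principal
minors are positive has a Cholesky decomposition. -/
theorem cholesky_of_positive_leading_principal_minors
    (F : Type*) [Field F] (hF : IsDefiniteField F) (n : ℕ)
    (A : Matrix (Fin n) (Fin n) F) (hsymm : A.IsSymm)
    (hminors : ∀ (k : ℕ) (hk : k ≤ n), 0 < k →
      IsPos ((A.submatrix (Fin.castLE hk) (Fin.castLE hk)).det)) :
    ∃ L : Matrix (Fin n) (Fin n) F,
      IsLowerTri L ∧ (∀ i, IsPos (L i i)) ∧ A = L * L.transpose := by
  induction n with
  | zero =>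
    exact ⟨0, fun i j _ => rfl, fun i => i.elim0, by ext i j; exact i.elim0⟩
  | succ n ih =>
    set A' := A.submatrix Fin.castSucc Fin.castSucc with hA'def
    have hminors' : ∀ (k : ℕ) (hk : k ≤ n), 0 < k →
        IsPos ((A'.submatrix (Fin.castLE hk) (Fin.castLE hk)).det) := by
      intro k hk hkpos
      have h1 : A'.submatrix (Fin.castLE hk) (Fin.castLE hk)
          = A.submatrix (Fin.castLE (hk.trans n.le_succ)) (Fin.castLE (hk.trans n.le_succ)) := by
        rw [hA'def, Matrix.submatrix_submatrix]
        congr 1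
      rw [h1]
      exact hminors k _ hkpos
    obtain ⟨L', hL'tri, hL'diag, hA'⟩ := ih A' (hsymm.submatrix _) hminors'
    have hL'det : L'.det ≠ 0 := by
      rw [Matrix.det_of_lowerTriangular L' (fun i j h => hL'tri i j (OrderDual.toDual_lt_toDual.1 h))]
      refine Finset.prod_ne_zero_iff.2 fun i _ => ?_
      obtain ⟨μ, hμ, hμ2⟩ := hL'diag i
      rw [hμ2]; exact pow_ne_zero _ hμ
    set b : Fin n → F := fun i => A i.castSucc (Fin.last n) with hbdef
    set w : Fin n → F := L'⁻¹ *ᵥ b with hwdef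
    have hb : ∀ k : Fin n, ∑ x, L' k x * w x = A k.castSucc (Fin.last n) := by
      intro k
      have hw : L' *ᵥ w = b := by
        rw [hwdef, Matrix.mulVec_mulVec, Matrix.mul_nonsing_inv _ (Ne.isUnit hL'det),
          Matrix.one_mulVec]
      have h := congrFun hw k
      simpa [Matrix.mulVec, dotProduct, hbdef] using h
    set s : F := A (Fin.last n) (Fin.last n) - ∑ k, w k * w k with hsdef
    set M : Matrix (Fin (n + 1)) (Fin (n + 1)) F :=
      fun i => Fin.lastCases (Fin.snoc w 1) (fun i' => Fin.snoc (L' i') 0) i with hMdef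
    have hMtri : ∀ i j : Fin (n + 1), i < j → M i j = 0 := by
      intro i j hij
      induction i using Fin.lastCases with
      | last => exact absurd hij (Fin.le_last j).not_gt
      | cast i' =>
        induction j using Fin.lastCases with
        | last => simp [hMdef]
        | cast j' =>
        simp only [hMdef, Fin.lastCases_castSucc, Fin.snoc_castSucc]
        exact hL'tri i' j' (by simpa using hij)
    have hkey : ∀ g : Fin (n + 1) → F,
        (M * Matrix.diagonal g * Mᵀ) = fun i j => ∑ k, M i k * g k * M j k := by
      intro g
      ext i j
      rw [Matrix.mul_apply]
      simp only [Matrix.mul_diagonal, Matrix.transpose_apply]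
    -- the central identity : M * diag(1,...,1,s) * Mᵀ = A
    have hMDM : M * Matrix.diagonal (Fin.snoc (1 : Fin n → F) s) * Mᵀ = A := by
      rw [hkey]
      ext i j
      induction i using Fin.lastCases with
      | last =>
        induction j using Fin.lastCases with
        | last =>
        rw [Fin.sum_univ_castSucc]
        simp only [hMdef, Fin.lastCases_last, Fin.snoc_castSucc, Fin.snoc_last,
          Pi.one_apply, mul_one, one_mul]
        rw [hsdef]; ring
        | cast j' =>
        rw [Fin.sum_univ_castSucc]
        simp only [hMdef, Fin.lastCases_last, Fin.lastCases_castSucc, Fin.snoc_castSucc,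
          Fin.snoc_last, Pi.one_apply, mul_one, one_mul, mul_zero, add_zero]
        rw [hsymm.apply, ← hb j']
        exact Finset.sum_congr rfl fun k _ => mul_comm _ _
      | cast i' =>
        induction j using Fin.lastCases with
        | last =>
          rw [Fin.sum_univ_castSucc]
          simp only [hMdef, Fin.lastCases_last, Fin.lastCases_castSucc, Fin.snoc_castSucc,
            Fin.snoc_last, Pi.one_apply, mul_one, one_mul, zero_mul, add_zero]
          exact hb i'
        | cast j' =>
          rw [Fin.sum_univ_castSucc]
          simp only [hMdef, Fin.lastCases_castSucc, Fin.snoc_castSucc, Fin.snoc_last,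
            Pi.one_apply, mul_one, zero_mul, add_zero]
          have : A' i' j' = (L' * L'.transpose) i' j' := congrFun (congrFun hA' i') j'
          rw [Matrix.mul_apply] at this
          rw [hA'def] at this
          simpa [Matrix.submatrix, Matrix.transpose_apply] using this.symm
    have hMdiag : ∀ i : Fin (n + 1), M i i = (Fin.snoc (fun i' : Fin n => L' i' i') 1 : Fin (n+1) → F) i := by
      intro i
      induction i using Fin.lastCases with
      | last => simp [hMdef]
      | cast i' => simp [hMdef]
    have hMdet : M.det ≠ 0 := by
      rw [Matrix.det_of_lowerTriangular M (fun i j h => hMtri i j (OrderDual.toDual_lt_toDual.1 h))]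
      refine Finset.prod_ne_zero_iff.2 fun i _ => ?_
      rw [hMdiag i]
      induction i using Fin.lastCases with
      | last => simp
      | cast i' =>
        simp only [Fin.snoc_castSucc]
        obtain ⟨μ, hμ, hμ2⟩ := hL'diag i'
        rw [hμ2]; exact pow_ne_zero _ hμ
    have hdetA : IsPos A.det := by
      have := hminors (n + 1) le_rfl n.succ_pos
      have h2 : A.submatrix (Fin.castLE le_rfl) (Fin.castLE le_rfl) = A := by
        have : Fin.castLE (le_refl (n + 1)) = id := by funext i; exact Fin.ext rfl
        rw [this, Matrix.submatrix_id_id]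
      rwa [h2] at this
    have hdetD : (Matrix.diagonal (Fin.snoc (1 : Fin n → F) s)).det = s := by
      rw [Matrix.det_diagonal, Fin.prod_univ_castSucc]
      simp
    have hdetAe : A.det = M.det ^ 2 * s := by
      rw [← hMDM, Matrix.det_mul, Matrix.det_mul, Matrix.det_transpose, hdetD]
      ring
    obtain ⟨μ, hμ, hμ2⟩ := hdetA
    have hsPos : IsPos s := by
      refine ⟨μ / M.det, div_ne_zero hμ hMdet, ?_⟩
      rw [div_pow, ← hμ2, hdetAe]
      field_simp
    obtain ⟨d, hdPos, hds⟩ := hF s hsPos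
    refine ⟨M * Matrix.diagonal (Fin.snoc (1 : Fin n → F) d), ?_, ?_, ?_⟩
    · intro i j hij
      rw [Matrix.mul_diagonal, hMtri i j hij, zero_mul]
    · intro i
      rw [Matrix.mul_diagonal, hMdiag i]
      induction i using Fin.lastCases with
      | last => simpa using hdPos
      | cast i' => simpa using hL'diag i'
    · have hgd : Matrix.diagonal (Fin.snoc (1 : Fin n → F) d)
            * Matrix.diagonal (Fin.snoc (1 : Fin n → F) d)
          = Matrix.diagonal (Fin.snoc (1 : Fin n → F) s) := by
        rw [Matrix.diagonal_mul_diagonal]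
        refine congrArg Matrix.diagonal (funext fun i => ?_)
        induction i using Fin.lastCases with
        | last => simp [hds, sq]
        | cast i' => simp
      have hfin : M * Matrix.diagonal (Fin.snoc (1 : Fin n → F) d)
            * (M * Matrix.diagonal (Fin.snoc (1 : Fin n → F) d))ᵀ
          = M * Matrix.diagonal (Fin.snoc (1 : Fin n → F) s) * Mᵀ := by
        rw [Matrix.transpose_mul, Matrix.diagonal_transpose,
          Matrix.mul_assoc M (Matrix.diagonal _),
          ← Matrix.mul_assoc (Matrix.diagonal _) (Matrix.diagonal _) Mᵀ, hgd,
          ← Matrix.mul_assoc M (Matrix.diagonal _) Mᵀ]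
      rw [hfin, hMDM]
end

section
/- Let A be a symmetric n × n matrix over a definite field F. Then A is positive definite if and only if there exists a lower triangular matrix E over F with all ones along its diagonal such that E·A·Eᵀ is a diagonal matrix all of whose diagonal entries are positive. (This is the matrix formulation of the statement that the vertices of an F-pseudograph with weighted adjacency matrix A, taken in the usual order, form a successful pressing sequence if and only if A is positive definite.) -/
/-- `A` is positive definite: it has a Cholesky decomposition. -/
def IsPosDef {F : Type*} [Field F] {n : ℕ} (A : Matrix (Fin n) (Fin n) F) : Prop :=
  ∃ L : Matrix (Fin n) (Fin n) F,
    IsLowerTri L ∧ (∀ i, IsPos (L i i)) ∧ A = L * L.transpose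

section Aux

variable {F : Type*} [Field F] {n : ℕ}

lemma lt_blockTri {L : Matrix (Fin n) (Fin n) F} (h : IsLowerTri L) :
    L.BlockTriangular OrderDual.toDual := fun i j hij => h i j hij

lemma blockTri_lt {L : Matrix (Fin n) (Fin n) F} (h : L.BlockTriangular OrderDual.toDual) :
    IsLowerTri L := fun i j hij => h hij

lemma mul_lowerTri {L M : Matrix (Fin n) (Fin n) F} (hL : IsLowerTri L) (hM : IsLowerTri M) :
    IsLowerTri (L * M) :=
  blockTri_lt ((lt_blockTri hL).mul (lt_blockTri hM))

lemma diag_mul_lowerTri {L M : Matrix (Fin n) (Fin n) F} (hL : IsLowerTri L)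
    (hM : IsLowerTri M) (i : Fin n) : (L * M) i i = L i i * M i i := by
  rw [Matrix.mul_apply]
  rw [Finset.sum_eq_single i]
  · intro k _ hk
    rcases lt_or_gt_of_ne hk with h | h
    · rw [hM k i h, mul_zero]
    · rw [hL i k h, zero_mul]
  · simp

lemma det_lowerTri {L : Matrix (Fin n) (Fin n) F} (hL : IsLowerTri L) :
    L.det = ∏ i, L i i :=
  Matrix.det_of_lowerTriangular L (lt_blockTri hL)

lemma lowerTri_invertible {L : Matrix (Fin n) (Fin n) F} (hL : IsLowerTri L)
    (hd : ∀ i, L i i ≠ 0) : IsUnit L.det := by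
  rw [det_lowerTri hL]
  exact (Finset.prod_ne_zero_iff.2 fun i _ => hd i).isUnit

lemma inv_lowerTri {L : Matrix (Fin n) (Fin n) F} (hL : IsLowerTri L)
    (hd : ∀ i, L i i ≠ 0) : IsLowerTri L⁻¹ := by
  haveI := L.invertibleOfIsUnitDet (lowerTri_invertible hL hd)
  exact blockTri_lt (Matrix.blockTriangular_inv_of_blockTriangular (lt_blockTri hL))

lemma inv_diag_lowerTri {L : Matrix (Fin n) (Fin n) F} (hL : IsLowerTri L)
    (hd : ∀ i, L i i ≠ 0) (i : Fin n) : L⁻¹ i i = (L i i)⁻¹ := by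
  have h1 : (L⁻¹ * L) i i = 1 := by
    rw [Matrix.nonsing_inv_mul L (lowerTri_invertible hL hd)]; simp
  rw [diag_mul_lowerTri (inv_lowerTri hL hd) hL] at h1
  exact eq_inv_of_mul_eq_one_left h1

lemma diagonal_lowerTri (f : Fin n → F) : IsLowerTri (Matrix.diagonal f) := by
  intro i j hij
  exact Matrix.diagonal_apply_ne f (ne_of_lt hij)

end Aux

/-- A symmetric matrix `A` over a definite field is positive definite iff
there is a lower triangular matrix `E` with unit diagonal such that `E·A·Eᵀ` is diagonal
with positive diagonal entries (matrix formulation of: the vertices in the usual order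
form a successful pressing sequence iff `A` is positive definite). -/
theorem posdef_iff_pressing_elimination
    (F : Type*) [Field F] (hF : IsDefiniteField F) (n : ℕ)
    (A : Matrix (Fin n) (Fin n) F) (hsymm : A.IsSymm) :
    IsPosDef A ↔
      ∃ E : Matrix (Fin n) (Fin n) F,
        IsLowerTri E ∧ (∀ i, E i i = 1) ∧
        ∃ d : Fin n → F, (∀ i, IsPos (d i)) ∧
          E * A * E.transpose = Matrix.diagonal d := by
  constructor
  · rintro ⟨L, hL, hpos, rfl⟩
    have hd : ∀ i, L i i ≠ 0 := by
      intro i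
      obtain ⟨μ, hμ, hμ2⟩ := hpos i
      rw [hμ2]; exact pow_ne_zero 2 hμ
    have hdet : IsUnit L.det := lowerTri_invertible hL hd
    have hdetT : IsUnit L.transpose.det := by rwa [Matrix.det_transpose]
    refine ⟨Matrix.diagonal (fun i => L i i) * L⁻¹,
      mul_lowerTri (diagonal_lowerTri _) (inv_lowerTri hL hd), ?_,
      fun i => (L i i) ^ 2, fun i => ⟨L i i, hd i, rfl⟩, ?_⟩
    · intro i
      rw [diag_mul_lowerTri (diagonal_lowerTri _) (inv_lowerTri hL hd),
        inv_diag_lowerTri hL hd, Matrix.diagonal_apply_eq]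
      exact mul_inv_cancel₀ (hd i)
    · rw [Matrix.transpose_mul, Matrix.transpose_nonsing_inv, Matrix.diagonal_transpose]
      calc Matrix.diagonal (fun i => L i i) * L⁻¹ * (L * L.transpose) *
            (L.transpose⁻¹ * Matrix.diagonal (fun i => L i i))
          = Matrix.diagonal (fun i => L i i) * (L⁻¹ * (L * (L.transpose *
            (L.transpose⁻¹ * Matrix.diagonal (fun i => L i i))))) := by
            noncomm_ring
        _ = Matrix.diagonal (fun i => L i i) * Matrix.diagonal (fun i => L i i) := by
            rw [Matrix.mul_nonsing_inv_cancel_left _ _ hdetT,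
              Matrix.nonsing_inv_mul_cancel_left _ _ hdet]
        _ = Matrix.diagonal (fun i => L i i ^ 2) := by
            rw [Matrix.diagonal_mul_diagonal]
            congr 1; funext i; ring
  · rintro ⟨E, hE, hE1, d, hd, hEAE⟩
    have hd1 : ∀ i, E i i ≠ 0 := fun i => by rw [hE1 i]; exact one_ne_zero
    have hdet : IsUnit E.det := lowerTri_invertible hE hd1
    have hdetT : IsUnit E.transpose.det := by rwa [Matrix.det_transpose]
    choose μ hμpos hμ2 using fun i => hF (d i) (hd i)
    have hμne : ∀ i, μ i ≠ 0 := by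
      intro i
      obtain ⟨ν, hν, hν2⟩ := hμpos i
      rw [hν2]; exact pow_ne_zero 2 hν
    refine ⟨E⁻¹ * Matrix.diagonal μ,
      mul_lowerTri (inv_lowerTri hE hd1) (diagonal_lowerTri _), ?_, ?_⟩
    · intro i
      rw [diag_mul_lowerTri (inv_lowerTri hE hd1) (diagonal_lowerTri _),
        inv_diag_lowerTri hE hd1, hE1, Matrix.diagonal_apply_eq, inv_one, one_mul]
      exact hμpos i
    · symm
      rw [Matrix.transpose_mul, Matrix.transpose_nonsing_inv, Matrix.diagonal_transpose]
      have hdiag : Matrix.diagonal μ * Matrix.diagonal μ = Matrix.diagonal d := by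
        have hfun : (fun i => μ i * μ i) = d := funext fun i => by rw [hμ2 i, sq]
        rw [Matrix.diagonal_mul_diagonal, hfun]
      calc E⁻¹ * Matrix.diagonal μ * (Matrix.diagonal μ * E.transpose⁻¹)
          = E⁻¹ * (Matrix.diagonal μ * Matrix.diagonal μ) * E.transpose⁻¹ := by
            noncomm_ring
        _ = E⁻¹ * (E * A * E.transpose) * E.transpose⁻¹ := by rw [hdiag, hEAE]
        _ = A := by
            simp only [Matrix.mul_assoc]
            rw [Matrix.mul_nonsing_inv _ hdetT, Matrix.mul_one,
              Matrix.nonsing_inv_mul_cancel_left _ _ hdet]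
end

section
/- The 2 × 2 matrix [[6,6],[6,4]] over the finite field F₇ has eigenvalues 1 and 2, both of which are positive in F₇, yet the matrix is not positive definite. Hence a symmetric matrix over a finite definite field with all eigenvalues positive need not be positive definite. -/
instance : Fact (Nat.Prime 7) := ⟨by norm_num⟩

/-- The matrix `[[6,6],[6,4]]` over `F₇` has eigenvalues `1` and `2`,
both positive in `F₇`, yet it is not positive definite. -/
theorem positive_eigenvalues_not_posdef :
    (∃ v : Fin 2 → ZMod 7, v ≠ 0 ∧
        (!![6, 6; 6, 4] : Matrix (Fin 2) (Fin 2) (ZMod 7)).mulVec v = (1 : ZMod 7) • v) ∧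
    (∃ w : Fin 2 → ZMod 7, w ≠ 0 ∧
        (!![6, 6; 6, 4] : Matrix (Fin 2) (Fin 2) (ZMod 7)).mulVec w = (2 : ZMod 7) • w) ∧
    IsPos (1 : ZMod 7) ∧ IsPos (2 : ZMod 7) ∧
    ¬ IsPosDef (!![6, 6; 6, 4] : Matrix (Fin 2) (Fin 2) (ZMod 7)) := by
  refine ⟨⟨![3,1], ?_, ?_⟩, ⟨![3,5], ?_, ?_⟩, ⟨1, by decide, by decide⟩, ⟨3, by decide, by decide⟩, ?_⟩
  · intro h; have := congrFun h 0; simp at this; exact absurd this (by decide)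
  · funext i; fin_cases i <;> simp [Matrix.mulVec, dotProduct] <;> decide
  · intro h; have := congrFun h 0; simp at this; exact absurd this (by decide)
  · funext i; fin_cases i <;> simp [Matrix.mulVec, dotProduct] <;> decide
  · rintro ⟨L, hlt, hpos, hA⟩
    have h01 : L 0 1 = 0 := hlt 0 1 (by decide)
    have h00 : (6 : ZMod 7) = L 0 0 * L 0 0 := by
      have := congrFun (congrFun hA 0) 0
      simpa [Matrix.mul_apply, Fin.sum_univ_two, Matrix.transpose_apply, h01] using this
    revert h00
    have : ∀ a : ZMod 7, (6 : ZMod 7) ≠ a * a := by decide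
    exact this (L 0 0)
end

section
/- The 3 × 3 matrix A = [[1,2,0],[2,2,0],[0,0,1]] over the finite field F₃ is positive definite and invertible with inverse A⁻¹ = [[2,1,0],[1,1,0],[0,0,1]], but A⁻¹ is not positive definite. Hence the inverse of a positive definite matrix over a finite definite field need not be positive definite. -/
/-- The matrix `A = [[1,2,0],[2,2,0],[0,0,1]]` over `F₃` is positive
definite and invertible with inverse `[[2,1,0],[1,1,0],[0,0,1]]`, but `A⁻¹` is not
positive definite. -/
theorem inverse_not_posdef :
    IsPosDef (!![1, 2, 0; 2, 2, 0; 0, 0, 1] : Matrix (Fin 3) (Fin 3) (ZMod 3)) ∧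
    IsUnit (!![1, 2, 0; 2, 2, 0; 0, 0, 1] : Matrix (Fin 3) (Fin 3) (ZMod 3)).det ∧
    (!![1, 2, 0; 2, 2, 0; 0, 0, 1] : Matrix (Fin 3) (Fin 3) (ZMod 3))⁻¹ =
      (!![2, 1, 0; 1, 1, 0; 0, 0, 1] : Matrix (Fin 3) (Fin 3) (ZMod 3)) ∧
    ¬ IsPosDef (!![1, 2, 0; 2, 2, 0; 0, 0, 1] : Matrix (Fin 3) (Fin 3) (ZMod 3))⁻¹ := by
  have hinv : (!![1, 2, 0; 2, 2, 0; 0, 0, 1] : Matrix (Fin 3) (Fin 3) (ZMod 3))⁻¹ =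
      (!![2, 1, 0; 1, 1, 0; 0, 0, 1] : Matrix (Fin 3) (Fin 3) (ZMod 3)) := by
    apply Matrix.inv_eq_right_inv
    ext i j
    fin_cases i <;> fin_cases j <;> simp [Matrix.mul_apply, Fin.sum_univ_succ] <;> decide
  refine ⟨⟨!![1,0,0; 2,1,0; 0,0,1], ?_, ?_, ?_⟩, ?_, hinv, ?_⟩
  · intro i j hij
    fin_cases i <;> fin_cases j <;> simp_all
  · intro i
    fin_cases i <;> exact ⟨1, by decide, by decide⟩
  · ext i j
    fin_cases i <;> fin_cases j <;>
      simp [Matrix.mul_apply, Matrix.transpose_apply, Fin.sum_univ_succ] <;> decide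
  · rw [show ((!![1, 2, 0; 2, 2, 0; 0, 0, 1] : Matrix (Fin 3) (Fin 3) (ZMod 3)).det) = 1 by decide]
    exact isUnit_one
  · rw [hinv]
    rintro ⟨L, hLT, hpos, heq⟩
    have h01 : L 0 1 = 0 := hLT 0 1 (by decide)
    have h02 : L 0 2 = 0 := hLT 0 2 (by decide)
    have h00 : (2 : ZMod 3) = L 0 0 * L 0 0 := by
      have := congrFun (congrFun heq 0) 0
      simpa [Matrix.mul_apply, Matrix.transpose_apply, Fin.sum_univ_succ, h01, h02] using this
    exact (by decide : ∀ x : ZMod 3, (2 : ZMod 3) ≠ x * x) _ h00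
end

section
/- The 2 × 2 matrices A = [[1,4],[4,3]] and B = [[2,2],[2,3]] over the finite field F₇ are both positive definite, but their Hadamard (entrywise) product A ∘ B = [[2,1],[1,2]] is not positive definite, and their Frobenius inner product (the sum over all i, j of A_{ij}·B_{ij}) equals 6, which is not positive in F₇. -/
lemma aux_posdefA : IsPosDef (!![1, 4; 4, 3] : Matrix (Fin 2) (Fin 2) (ZMod 7)) := by
  refine ⟨!![1,0;4,1], ?_, ?_, ?_⟩
  · intro i j h; fin_cases i <;> fin_cases j <;> simp_all
  · intro i; fin_cases i <;> exact ⟨1, by decide, by decide⟩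
  · ext i j; fin_cases i <;> fin_cases j <;>
      simp [Matrix.mul_apply, Fin.sum_univ_two] <;> decide

lemma aux_posdefB : IsPosDef (!![2, 2; 2, 3] : Matrix (Fin 2) (Fin 2) (ZMod 7)) := by
  refine ⟨!![4,0;4,1], ?_, ?_, ?_⟩
  · intro i j h; fin_cases i <;> fin_cases j <;> simp_all
  · intro i; fin_cases i
    · exact ⟨2, by decide, by decide⟩
    · exact ⟨1, by decide, by decide⟩
  · ext i j; fin_cases i <;> fin_cases j <;>
      simp [Matrix.mul_apply, Fin.sum_univ_two] <;> decide

lemma aux_notposdef : ¬ IsPosDef (!![2, 1; 1, 2] : Matrix (Fin 2) (Fin 2) (ZMod 7)) := by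
  rintro ⟨L, hlt, hpos, heq⟩
  have h01 : L 0 1 = 0 := hlt 0 1 (by decide)
  have hd : (L.det)^2 = 3 := by
    have : Matrix.det (!![2, 1; 1, 2] : Matrix (Fin 2) (Fin 2) (ZMod 7)) = 3 := by decide
    rw [heq, Matrix.det_mul, Matrix.det_transpose] at this
    rw [sq]; exact this
  obtain ⟨μ0, h0, e0⟩ := hpos 0
  obtain ⟨μ1, h1, e1⟩ := hpos 1
  have hdet : L.det = L 0 0 * L 1 1 := by
    rw [Matrix.det_fin_two, h01]; ring
  rw [hdet, e0, e1] at hd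
  have key : ((μ0 * μ1) ^ 2) ^ 2 = 3 := by rw [← hd]; ring
  have hne : μ0 * μ1 ≠ 0 := mul_ne_zero h0 h1
  revert key hne
  generalize μ0 * μ1 = x
  revert x
  decide

/-- The matrices `A = [[1,4],[4,3]]` and `B = [[2,2],[2,3]]` over `F₇` are
positive definite, but their Hadamard product `[[2,1],[1,2]]` is not positive definite,
and their Frobenius inner product equals `6`, which is not positive in `F₇`. -/
theorem hadamard_and_frobenius_counterexample :
    IsPosDef (!![1, 4; 4, 3] : Matrix (Fin 2) (Fin 2) (ZMod 7)) ∧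
    IsPosDef (!![2, 2; 2, 3] : Matrix (Fin 2) (Fin 2) (ZMod 7)) ∧
    Matrix.hadamard (!![1, 4; 4, 3] : Matrix (Fin 2) (Fin 2) (ZMod 7)) !![2, 2; 2, 3] =
      !![2, 1; 1, 2] ∧
    ¬ IsPosDef (Matrix.hadamard
        (!![1, 4; 4, 3] : Matrix (Fin 2) (Fin 2) (ZMod 7)) !![2, 2; 2, 3]) ∧
    (∑ i : Fin 2, ∑ j : Fin 2,
        (!![1, 4; 4, 3] : Matrix (Fin 2) (Fin 2) (ZMod 7)) i j * !![2, 2; 2, 3] i j)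
      = 6 ∧
    ¬ IsPos (6 : ZMod 7) := by
  have hhad : Matrix.hadamard (!![1, 4; 4, 3] : Matrix (Fin 2) (Fin 2) (ZMod 7)) !![2, 2; 2, 3]
      = !![2, 1; 1, 2] := by
    ext i j; fin_cases i <;> fin_cases j <;> simp [Matrix.hadamard] <;> decide
  refine ⟨aux_posdefA, aux_posdefB, hhad, ?_, ?_, ?_⟩
  · rw [hhad]; exact aux_notposdef
  · simp [Fin.sum_univ_two]; decide
  · rintro ⟨μ, hμ, hsq⟩; revert hμ hsq; revert μ; decide
end
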